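/- Let M ≥ 1 and let f : (ZMod M → ℝ) → ℝ be shift-invariant, i.e., f(T_M y) = f(y) for all y : ZMod M → ℝ. Define p(k|x) = exp(f(Poly(x)_k)) / Σ_{j ∈ {0,1}} exp(f(Poly(x)_j)) for x : ZMod (2M) → ℝ and k ∈ {0,1}. Then p is shift-permutation equivariant: p(1−k | T_{2M} x) = p(k | x) for all x and all k ∈ {0,1}. -/
import Mathlib


/-- Circular shift of a signal of length `N`: `(T_N x)[n] = x[n+1]`. -/
def Tshift (N : ℕ) (x : ZMod N → ℝ) : ZMod N → ℝ := fun n => x (n + 1)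

/-- Polyphase component `k ∈ {0,1}` of a signal of length `2M`:
`Poly(x)_k[n] = x[(2 n̄ + k) mod 2M]`. -/
def poly (M : ℕ) (x : ZMod (2 * M) → ℝ) (k : Fin 2) : ZMod M → ℝ :=
  fun n => x ((2 * n.val + k.val : ℕ) : ZMod (2 * M))

/-- `p` is shift-permutation equivariant: `p (T_{2M} x) (1 - k) = p x k`. -/
def ShiftPermEquivariant (M : ℕ) (p : (ZMod (2 * M) → ℝ) → Fin 2 → ℝ) : Prop :=
  ∀ (x : ZMod (2 * M) → ℝ) (k : Fin 2), p (Tshift (2 * M) x) (1 - k) = p x k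

lemma poly_shift_zero (M : ℕ) [NeZero M] (x : ZMod (2 * M) → ℝ) :
    poly M (Tshift (2 * M) x) 0 = poly M x 1 := by
  funext n
  simp [poly, Tshift]

lemma poly_shift_one (M : ℕ) [NeZero M] (x : ZMod (2 * M) → ℝ) :
    poly M (Tshift (2 * M) x) 1 = Tshift M (poly M x 0) := by
  funext n
  simp only [poly, Tshift, Fin.val_one, Fin.val_zero, Nat.add_zero]
  have hmod : (n + 1).val ≡ n.val + 1 [MOD M] := by
    rw [ZMod.val_add, ZMod.val_one_eq_one_mod]
    exact (Nat.mod_modEq _ M).trans (Nat.ModEq.add_left n.val (Nat.mod_modEq 1 M))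
  have : (2 * (n + 1).val : ℕ) ≡ 2 * (n.val + 1) [MOD 2 * M] := hmod.mul_left' 2
  have hc := (ZMod.natCast_eq_natCast_iff _ _ _).mpr this
  rw [hc]
  congr 1
  push_cast
  ring

/-- If `f` is shift-invariant, the softmax `p(k|x) = exp f(Poly(x)_k) / Σ_j exp f(Poly(x)_j)`
is shift-permutation equivariant. -/
theorem softmax_shift_perm_equivariant (M : ℕ) [NeZero M]
    (f : (ZMod M → ℝ) → ℝ) (hf : ∀ y : ZMod M → ℝ, f (Tshift M y) = f y) :
    ShiftPermEquivariant M (fun x k =>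
      Real.exp (f (poly M x k)) / ∑ j : Fin 2, Real.exp (f (poly M x j))) := by
  intro x k
  have h0 : f (poly M (Tshift (2 * M) x) 0) = f (poly M x 1) := by
    rw [poly_shift_zero]
  have h1 : f (poly M (Tshift (2 * M) x) 1) = f (poly M x 0) := by
    rw [poly_shift_one, hf]
  simp only [Fin.sum_univ_two, h0, h1]
  fin_cases k <;> simp [h0, h1] <;> ring
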